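/- Let (H_t)_{t∈[0,1]} be a continuous family of degree-one monotone lifts such that for every x ∈ ℝ the map t ↦ H_t(x) is monotone (nonincreasing for every x, or nondecreasing for every x). Assume that H₀ is strictly increasing and surjective and that its induced circle homeomorphism is minimal, that |τ(H₁) − τ(H₀)| < 1, and that H₁(y₀) ≠ H₀(y₀) for some y₀ ∈ ℝ. Then τ(H₁) ≠ τ(H₀). -/

import Mathlib

open Set Filter

/-- A degree-one monotone lift: a continuous nondecreasing map `H : ℝ → ℝ` with
`H(x+1) = H(x)+1` for all `x`; it induces a continuous degree-one monotone self-map of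
`ℝ/ℤ` (a circle endomorphism), which is an orientation-preserving circle homeomorphism when
`H` is strictly increasing and surjective. -/
def IsDeg1MonotoneLift (H : ℝ → ℝ) : Prop :=
  Continuous H ∧ Monotone H ∧ ∀ x : ℝ, H (x + 1) = H x + 1

/-- `τ` is the translation number of the degree-one monotone lift `H`:
`(Hⁿ(x) − x)/n → τ` for every `x`.  The rotation number of the induced circle map is
`τ` mod 1. -/
def HasTransNum (H : ℝ → ℝ) (τ : ℝ) : Prop :=
  ∀ x : ℝ, Tendsto (fun n : ℕ => (H^[n] x - x) / (n : ℝ)) atTop (nhds τ)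

/-- The circle homeomorphism induced by the lift `H` is minimal: for every `x ∈ ℝ` the full
orbit `{Hⁿ(x) + m : n, m ∈ ℤ}` is dense in `ℝ` (`y` belongs to this set iff `Hⁿ(x) + m = y`
for some `n ∈ ℕ, m ∈ ℤ`, or `Hⁿ(y) + m = x` for some `n ∈ ℕ, m ∈ ℤ`). -/
def IsMinimalLift (H : ℝ → ℝ) : Prop :=
  ∀ x : ℝ, Dense {y : ℝ | ∃ n : ℕ, ∃ m : ℤ, H^[n] x + (m : ℝ) = y ∨ H^[n] y + (m : ℝ) = x}

/-!
Suppose `τ(H₁) = τ(H₀) = ρ`; we show `H₁ = H₀`. Minimality makes `ρ` irrational: a rational `ρ`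
gives a periodic orbit, whose integer translates form a closed countable set. Hence the
semiconjugacy of `H₀` to `x ↦ x + ρ` (Ghys' semiconjugacy theorem) is injective with dense range,
i.e. a conjugacy `h`. The map `g = h H₁ h⁻¹` lies on one side of `x ↦ x + ρ` and has translation
number `ρ`, so a point with `gⁿ x = x + nρ` forces `g = (· + ρ)` along `x, x + ρ, …, x + (n-1)ρ`.
A nested compact intersection yields `c` with `g = (· + ρ)` on all of `c + ℤρ + ℤ`, which is
dense. Thus `g = (· + ρ)`, i.e. `H₁ = H₀`.
-/

open CircleDeg1Lift

lemma Irrational.intCast_mul_add_intCast_ne_zero {ρ : ℝ} (hρ : Irrational ρ) {j : ℤ} (hj : j ≠ 0)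
    (m : ℤ) : j * ρ + m ≠ 0 :=
  ((hρ.intCast_mul hj).add_intCast m).ne_zero

lemma Irrational.dense_intCast_mul_add_intCast {ρ : ℝ} (hρ : Irrational ρ) :
    Dense {z : ℝ | ∃ j m : ℤ, j * ρ + m = z} := by
  refine (dense_addSubgroupClosure_pair_iff.2 (by rwa [div_one] : Irrational (ρ / 1))).mono ?_
  rintro z hz
  obtain ⟨j, m, rfl⟩ := AddSubgroup.mem_closure_pair.1 hz
  exact ⟨j, m, by simp⟩

namespace CircleDeg1Lift

lemma continuous_units (f : CircleDeg1Liftˣ) : Continuous (f : CircleDeg1Lift) :=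
  (continuous_iff_surjective _).2 (by simpa using (toOrderIso f).surjective)

lemma translationNumber_eq_of_hasTransNum {f : CircleDeg1Lift} {ρ : ℝ} (hf : HasTransNum f ρ) :
    f.translationNumber = ρ := by
  refine tendsto_nhds_unique ?_ (hf 0)
  simpa only [coe_pow] using f.tendsto_translationNumber 0

lemma units_zpow_apply_eq_add_int {f : CircleDeg1Liftˣ} {x : ℝ} {c : ℤ} (h : f x = x + c)
    (q : ℤ) : (f ^ q) x = x + (q * c : ℤ) := by
  have hinv : (f⁻¹ : CircleDeg1Liftˣ) x = x - c := by
    rw [← units_inv_apply_apply f (x - c), map_sub_int, h, add_sub_cancel_right]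
  induction q using Int.induction_on with
  | zero => simp
  | succ q ih =>
    rw [zpow_add_one, Units.val_mul, mul_apply, h, map_add_int, ih]
    push_cast; ring
  | pred q ih =>
    rw [zpow_sub_one, Units.val_mul, mul_apply, hinv, map_sub_int, ih]
    push_cast; ring

lemma units_zpow_apply_mem_of_pow_apply_eq_add_int {f : CircleDeg1Liftˣ} {x : ℝ} {n : ℕ} {c : ℤ}
    (hn : 0 < n) (h : (f ^ n) x = x + c) (j : ℤ) :
    ∃ r < n, ∃ t : ℤ, (f ^ j) x = (f ^ r) x + t := by
  have hq := units_zpow_apply_eq_add_int (f := f ^ n) (by simpa using h) (j / n)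
  have hr₀ : 0 ≤ j % n := Int.emod_nonneg _ (by omega)
  have hrn : j % n < n := Int.emod_lt_of_pos _ (by omega)
  refine ⟨(j % n).toNat, by omega, j / n * c, ?_⟩
  have hj : j = (j % n).toNat + n * (j / n) := by
    rw [Int.toNat_of_nonneg hr₀]; exact (Int.emod_add_mul_ediv j n).symm
  conv_lhs => rw [hj, zpow_add, zpow_natCast, zpow_mul, zpow_natCast]
  rw [Units.val_mul, mul_apply, hq, map_add_int]

variable {g : CircleDeg1Lift}

lemma exists_forall_lt_map_add_mul_translationNumber (hg : Continuous g)
    (hcmp : (∀ z, z + g.translationNumber ≤ g z) ∨ (∀ z, g z ≤ z + g.translationNumber)) (n : ℕ) :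
    ∃ x, ∀ k < n,
      g (x + k * g.translationNumber) = x + k * g.translationNumber + g.translationNumber := by
  set ρ := g.translationNumber
  obtain ⟨x, hx⟩ := (g ^ n).exists_eq_add_translationNumber (g.continuous_pow hg n)
  rw [translationNumber_pow, coe_pow] at hx
  set s : ℕ → ℝ := fun k => g^[k] x - x - k * ρ
  have hstep : ∀ k, s (k + 1) - s k = g (g^[k] x) - g^[k] x - ρ := fun k => by
    simp only [s, Function.iterate_succ_apply']; push_cast; ring
  have hs : Monotone s ∨ Antitone s := hcmp.imp
    (fun h => monotone_nat_of_le_succ fun k => by linarith [hstep k, h (g^[k] x)])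
    (fun h => antitone_nat_of_succ_le fun k => by linarith [hstep k, h (g^[k] x)])
  have hzero : ∀ k ≤ n, s k = 0 := by
    have h0 : s 0 = 0 := by simp [s]
    have hn : s n = 0 := by simp only [s, hx]; ring
    intro k hk
    rcases hs with hs | hs
    · exact le_antisymm (hn ▸ hs hk) (h0 ▸ hs k.zero_le)
    · exact le_antisymm (h0 ▸ hs k.zero_le) (hn ▸ hs hk)
  refine ⟨x, fun k hk => ?_⟩
  have hk₀ := hzero k hk.le
  have hk₁ := hzero (k + 1) hk
  simp only [s, Function.iterate_succ_apply'] at hk₀ hk₁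
  push_cast at hk₁
  rw [show x + k * ρ = g^[k] x by linarith]
  linarith

theorem eq_add_translationNumber_of_le_or_ge (hg : Continuous g)
    (hρ : Irrational g.translationNumber)
    (hcmp : (∀ z, z + g.translationNumber ≤ g z) ∨ (∀ z, g z ≤ z + g.translationNumber)) (z : ℝ) :
    g z = z + g.translationNumber := by
  set ρ := g.translationNumber
  set E : Set ℝ := {z | g z = z + ρ}
  have hE_closed : IsClosed E := isClosed_eq hg (by fun_prop)
  have hE_add_int : ∀ y ∈ E, ∀ m : ℤ, y + m ∈ E := fun y (hy : g y = y + ρ) m => by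
    change g (y + m) = y + m + ρ
    rw [map_add_int, hy]; ring
  set B : ℕ → Set ℝ := fun N => ⋂ (j : ℤ) (_ : j.natAbs ≤ N), (· + j * ρ) ⁻¹' E
  have hB_closed : ∀ N, IsClosed (B N) := fun N =>
    isClosed_biInter fun j _ => hE_closed.preimage (by fun_prop)
  set A : ℕ → Set ℝ := fun N => Icc 0 1 ∩ B N
  obtain ⟨c, hc⟩ : (⋂ N, A N).Nonempty := by
    refine IsCompact.nonempty_iInter_of_sequence_nonempty_isCompact_isClosed A
      (fun N c hc => ⟨hc.1, mem_iInter₂.2 fun j hj => mem_iInter₂.1 hc.2 j (by omega)⟩)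
      (fun N => ?_) (isCompact_Icc.inter_right (hB_closed 0))
      fun N => isClosed_Icc.inter (hB_closed N)
    · obtain ⟨x, hx⟩ := exists_forall_lt_map_add_mul_translationNumber hg hcmp (2 * N + 1)
      refine ⟨Int.fract (x + N * ρ), ⟨Int.fract_nonneg _, (Int.fract_lt_one _).le⟩,
        mem_iInter₂.2 fun j hj => ?_⟩
      have hk := hx (N + j).toNat (by omega)
      have := hE_add_int _ hk (-⌊x + N * ρ⌋)
      have hcast : (((N + j).toNat : ℕ) : ℝ) = N + j := by
        exact_mod_cast (show ((N + j).toNat : ℤ) = N + j by omega)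
      rw [mem_preimage, Int.fract]
      convert this using 1
      rw [hcast]; push_cast; ring
  have hcE : ∀ j : ℤ, c + j * ρ ∈ E := fun j =>
    mem_iInter₂.1 (mem_iInter.1 hc j.natAbs).2 j le_rfl
  have hE_dense : Dense E := by
    refine (hρ.dense_intCast_mul_add_intCast.vadd c).mono ?_
    rintro _ ⟨_, ⟨j, m, rfl⟩, rfl⟩
    simpa [vadd_eq_add, add_assoc] using hE_add_int _ (hcE j) m
  change z ∈ E
  rw [← hE_closed.closure_eq, hE_dense.closure_eq]
  trivial

end CircleDeg1Lift

namespace IsMinimalLift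

lemma dense_zpow_orbit {f : CircleDeg1Liftˣ} (hf : IsMinimalLift ⇑(f : CircleDeg1Lift)) (x : ℝ) :
    Dense {y : ℝ | ∃ j m : ℤ, (f ^ j) x + m = y} := by
  refine (hf x).mono ?_
  rintro y ⟨n, m, rfl | hy⟩
  · exact ⟨n, m, by simp [Units.val_pow_eq_pow_val, coe_pow]⟩
  · refine ⟨-n, -m, ?_⟩
    rw [← hy, zpow_neg, zpow_natCast, map_add_int, ← coe_pow, ← Units.val_pow_eq_pow_val,
      units_inv_apply_apply]
    push_cast; ring

lemma irrational_translationNumber {f : CircleDeg1Liftˣ}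
    (hf : IsMinimalLift ⇑(f : CircleDeg1Lift)) :
    Irrational (f : CircleDeg1Lift).translationNumber := by
  rintro ⟨q, hq⟩
  obtain ⟨x, hx⟩ :=
    ((f : CircleDeg1Lift).translationNumber_eq_rat_iff (continuous_units f) q.pos).1
      (by rw [← hq, Rat.cast_def])
  rw [← Units.val_pow_eq_pow_val] at hx
  set K : Set ℝ := ⋃ r ∈ Finset.range q.den, range fun t : ℤ => (f ^ r) x + t
  have hK_closed : IsClosed K := (Finset.range q.den).finite_toSet.isClosed_biUnion fun r _ =>
    ((isClosedMap_add_left _).comp Int.isClosedEmbedding_coe_real.isClosedMap).isClosed_range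
  have hK_countable : K.Countable :=
    (Finset.range q.den).countable_toSet.biUnion fun r _ => countable_range _
  have horbit : {y : ℝ | ∃ j m : ℤ, (f ^ j) x + m = y} ⊆ K := by
    rintro y ⟨j, m, rfl⟩
    obtain ⟨r, hr, t, hj⟩ := units_zpow_apply_mem_of_pow_apply_eq_add_int q.pos hx j
    exact mem_biUnion (Finset.mem_range.2 hr) ⟨t + m, by push_cast [hj]; ring⟩
  have hK_univ : K = univ := by
    rw [← hK_closed.closure_eq, ← univ_subset_iff, ← (hf.dense_zpow_orbit x).closure_eq]
    exact closure_mono horbit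
  exact Cardinal.not_countable_real (hK_univ ▸ hK_countable)

variable {f : CircleDeg1Liftˣ} (hf : IsMinimalLift ⇑(f : CircleDeg1Lift))
include hf

theorem exists_units_conj_translate :
    ∃ h : CircleDeg1Liftˣ, ∀ x, h (f x) = h x + (f : CircleDeg1Lift).translationNumber := by
  set ρ := (f : CircleDeg1Lift).translationNumber
  obtain ⟨h, hh⟩ := units_semiconj_of_translationNumber_eq (f₁ := f)
    (f₂ := translate (Multiplicative.ofAdd ρ)) (by rw [translationNumber_translate])
  have horbit : ∀ (j m : ℤ) (x : ℝ), h ((f ^ j) x + m) = h x + (j * ρ + m) := by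
    intro j m x
    have := semiconjBy_iff_semiconj.1 ((semiconjBy_iff_semiconj.2 hh).units_zpow_right j) x
    rw [map_add_int, this, translate_zpow, CircleDeg1Lift.translate_apply]
    ring
  have hρ := hf.irrational_translationNumber
  have hinj : Function.Injective h := by
    intro a b hab
    by_contra hne
    wlog hlt : a < b generalizing a b
    · exact this hab.symm (Ne.symm hne) ((lt_or_gt_of_ne hne).resolve_left hlt)
    obtain ⟨y, ⟨j, m, rfl⟩, hay, hyb⟩ := (hf.dense_zpow_orbit a).exists_between hlt
    have hconst : h ((f ^ j) a + m) = h a :=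
      le_antisymm (hab ▸ OrderHomClass.mono h hyb.le) (OrderHomClass.mono h hay.le)
    rw [horbit, add_eq_left] at hconst
    obtain rfl : j = 0 := by_contra fun hj => hρ.intCast_mul_add_intCast_ne_zero hj m hconst
    obtain rfl : m = 0 := by simpa using hconst
    simp at hay
  have hdense : DenseRange h := by
    refine ((hρ.dense_intCast_mul_add_intCast).vadd (h 0)).mono ?_
    rintro _ ⟨_, ⟨j, m, rfl⟩, rfl⟩
    exact ⟨(f ^ j) 0 + m, horbit j m 0⟩
  have hsurj : Function.Surjective h :=
    (continuous_iff_surjective h).1 ((OrderHomClass.mono h).continuous_of_denseRange hdense)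
  obtain ⟨u, rfl⟩ := isUnit_iff_bijective.2 ⟨hinj, hsurj⟩
  exact ⟨u, fun x => by rw [hh x, CircleDeg1Lift.translate_apply, add_comm]⟩

end IsMinimalLift

namespace CircleDeg1Lift

theorem eq_of_le_or_ge_of_translationNumber_eq {f g : CircleDeg1Lift}
    (hf : Function.Bijective f) (hmin : IsMinimalLift f) (hgc : Continuous g)
    (hτ : g.translationNumber = f.translationNumber)
    (hcmp : (∀ x, f x ≤ g x) ∨ (∀ x, g x ≤ f x)) : g = f := by
  obtain ⟨f, rfl⟩ := isUnit_iff_bijective.2 hf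
  obtain ⟨h, hh⟩ := hmin.exists_units_conj_translate
  set ρ := (f : CircleDeg1Lift).translationNumber
  set g' : CircleDeg1Lift := h * g * ↑h⁻¹
  have hg'_apply : ∀ x, g' (h x) = h (g x) := fun x => by
    simp only [g', mul_apply, units_inv_apply_apply]
  have hg'_cont : Continuous g' := (continuous_units h).comp (hgc.comp (continuous_units h⁻¹))
  have hg'τ : g'.translationNumber = ρ := by rw [translationNumber_conj_eq, hτ]
  have hcmp' :
      (∀ z, z + g'.translationNumber ≤ g' z) ∨ (∀ z, g' z ≤ z + g'.translationNumber) := by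
    rw [hg'τ]
    refine hcmp.imp (fun hle z => ?_) (fun hle z => ?_) <;>
      obtain ⟨y, rfl⟩ := (toOrderIso h).surjective z <;>
      rw [coe_toOrderIso, hg'_apply, ← hh]
    exacts [OrderHomClass.mono _ (hle y), OrderHomClass.mono _ (hle y)]
  have hrigid := eq_add_translationNumber_of_le_or_ge hg'_cont
    (hg'τ ▸ hmin.irrational_translationNumber) hcmp'
  ext x
  apply (toOrderIso h).injective
  rw [coe_toOrderIso, ← hg'_apply, hrigid, hg'τ, hh]

end CircleDeg1Lift

theorem transNum_strictly_moves_endomorphisms_general (H : ℝ → ℝ → ℝ)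
    (hlift : ∀ t ∈ Icc (0:ℝ) 1, IsDeg1MonotoneLift (H t))
    (hmono : (∀ x : ℝ, MonotoneOn (fun t => H t x) (Icc 0 1)) ∨
             (∀ x : ℝ, AntitoneOn (fun t => H t x) (Icc 0 1)))
    (h0strict : StrictMono (H 0)) (h0surj : Function.Surjective (H 0))
    (h0min : IsMinimalLift (H 0))
    (τ0 τ1 : ℝ) (hτ0 : HasTransNum (H 0) τ0) (hτ1 : HasTransNum (H 1) τ1)
    (hmove : ∃ y₀ : ℝ, H 1 y₀ ≠ H 0 y₀) :
    τ1 ≠ τ0 := by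
  rintro rfl
  obtain ⟨y₀, hy₀⟩ := hmove
  have h₀ : (0 : ℝ) ∈ Icc (0 : ℝ) 1 := left_mem_Icc.2 zero_le_one
  have h₁ : (1 : ℝ) ∈ Icc (0 : ℝ) 1 := right_mem_Icc.2 zero_le_one
  obtain ⟨-, hF_mono, hF_add_one⟩ := hlift 0 h₀
  obtain ⟨hG_cont, hG_mono, hG_add_one⟩ := hlift 1 h₁
  set F : CircleDeg1Lift := ⟨⟨H 0, hF_mono⟩, hF_add_one⟩
  set G : CircleDeg1Lift := ⟨⟨H 1, hG_mono⟩, hG_add_one⟩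
  have hcmp : (∀ x, F x ≤ G x) ∨ (∀ x, G x ≤ F x) :=
    hmono.imp (fun hm x => hm x h₀ h₁ zero_le_one) (fun hm x => hm x h₀ h₁ zero_le_one)
  have hτ : G.translationNumber = F.translationNumber :=
    (translationNumber_eq_of_hasTransNum (f := G) hτ1).trans
      (translationNumber_eq_of_hasTransNum (f := F) hτ0).symm
  have hGF : G = F := eq_of_le_or_ge_of_translationNumber_eq (f := F)
    ⟨h0strict.injective, h0surj⟩ h0min hG_cont hτ hcmp
  exact hy₀ (DFunLike.congr_fun hGF y₀)

/-- Extension of the perturbation lemma for rotation numbers to families of circle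
endomorphisms: if `(H_t)_{t∈[0,1]}` is a continuous family of degree-one monotone lifts,
monotone in `t` (nonincreasing for every `x`, or nondecreasing for every `x`), if `H₀` is
strictly increasing and surjective with minimal induced circle homeomorphism, if
`|τ(H₁) − τ(H₀)| < 1` and `H₁(y₀) ≠ H₀(y₀)` for some `y₀`, then `τ(H₁) ≠ τ(H₀)`. -/
theorem transNum_strictly_moves_endomorphisms (H : ℝ → ℝ → ℝ)
    (hcont : ContinuousOn (fun p : ℝ × ℝ => H p.1 p.2) (Icc 0 1 ×ˢ univ))
    (hlift : ∀ t ∈ Icc (0:ℝ) 1, IsDeg1MonotoneLift (H t))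
    (hmono : (∀ x : ℝ, MonotoneOn (fun t => H t x) (Icc 0 1)) ∨
             (∀ x : ℝ, AntitoneOn (fun t => H t x) (Icc 0 1)))
    (h0strict : StrictMono (H 0)) (h0surj : Function.Surjective (H 0))
    (h0min : IsMinimalLift (H 0))
    (τ0 τ1 : ℝ) (hτ0 : HasTransNum (H 0) τ0) (hτ1 : HasTransNum (H 1) τ1)
    (hlt : |τ1 - τ0| < 1)
    (hmove : ∃ y₀ : ℝ, H 1 y₀ ≠ H 0 y₀) :
    τ1 ≠ τ0 :=
  transNum_strictly_moves_endomorphisms_general H hlift hmono h0strict h0surj h0min τ0 τ1 hτ0 hτ1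
    hmove
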